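/- Let p = 4, λ = √2, U = [[√2,−1],[1,0]], T = [[0,−1],[1,0]]. Define q(z) = (z − (√2+√14)/2)^{−1} + (z − (−√2+√14)/2)^{−1} − (z − (√2−√14)/6)^{−1} − (z − (−√2−√14)/6)^{−1}. Then q satisfies the two rational period function relations of weight 2 (k = 1) for the Hecke group G_4: q(z) + z^{−2} q(−1/z) = 0 and q + q|U + q|U² + q|U³ = 0, at every z ∈ ℂ where all terms are defined. That is, q is a rational period function of weight 2 on G_4. -/

import Mathlib

open Matrix

noncomputable section

abbrev SL2R := Matrix.SpecialLinearGroup (Fin 2) ℝ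

/-- `S = [[1,√2],[0,1]]`, the translation generator of `G₄`. -/
def Smat : SL2R := ⟨!![1, Real.sqrt 2; 0, 1], by norm_num [Matrix.det_fin_two_of]⟩

/-- `T = [[0,-1],[1,0]]`. -/
def Tmat : SL2R := ⟨!![0, -1; 1, 0], by norm_num [Matrix.det_fin_two_of]⟩

/-- `U = S * T = [[√2,-1],[1,0]]`. -/
def Umat : SL2R := Smat * Tmat

/-- Möbius action of a matrix on ℂ. -/
def mobius (M : SL2R) (z : ℂ) : ℂ :=
  ((M.1 0 0 : ℝ) * z + (M.1 0 1 : ℝ)) / ((M.1 1 0 : ℝ) * z + (M.1 1 1 : ℝ))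

/-- The automorphy denominator `cz + d`. -/
def denom (M : SL2R) (z : ℂ) : ℂ := (M.1 1 0 : ℝ) * z + (M.1 1 1 : ℝ)

/-- Weight `2k` slash operator: `(f|M)(z) = (cz+d)^{-2k} f(Mz)`. -/
def slash (k : ℕ) (M : SL2R) (f : ℂ → ℂ) (z : ℂ) : ℂ :=
  (denom M z) ^ (-(2 * (k : ℤ))) * f (mobius M z)

/-- `√2` as a complex number. -/
def sq2 : ℂ := (Real.sqrt 2 : ℝ)

/-- All four quadratics of the example are nonvanishing at `w`. -/
def QuadsNonzero (w : ℂ) : Prop :=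
  w ^ 2 - sq2 * w - 3 ≠ 0 ∧ w ^ 2 + sq2 * w - 3 ≠ 0 ∧
  3 * w ^ 2 - sq2 * w - 1 ≠ 0 ∧ 3 * w ^ 2 + sq2 * w - 1 ≠ 0

/-- `√14` as a complex number. -/
def sq14 : ℂ := (Real.sqrt 14 : ℝ)

/-- `w` avoids the four (simple) poles of the weight-2 example. -/
def AwayFromPoles (w : ℂ) : Prop :=
  w ≠ (sq2 + sq14) / 2 ∧ w ≠ (-sq2 + sq14) / 2 ∧
  w ≠ (sq2 - sq14) / 6 ∧ w ≠ (-sq2 - sq14) / 6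

/-! A weight-2 slash by `M = [[a, b], [c, d]]` turns a simple pole at `M w` into a simple pole
at `w` plus the term `-c/(cz + d)` times its residue. The residues of `q` sum to zero, so `q|M`
is `q` with its poles moved by `M⁻¹`. The map `T` swaps the poles of residue `1` with those of
residue `-1`, whence `q|T = -q`. The poles lie on two cycles of length 4 of `U⁻¹`, each carrying
one pole of residue `1` and one of residue `-1`; summing `q|Uᵗ` over `t < 4` runs every point of
both cycles once with either residue, and everything cancels. -/

lemma val_mul (M N : SL2R) : (M * N).1 = M.1 * N.1 := rfl

lemma val_det_eq_one (M : SL2R) : (M.1 0 0 : ℂ) * M.1 1 1 - M.1 0 1 * M.1 1 0 = 1 := by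
  have h := M.2
  rw [Matrix.det_fin_two] at h
  exact_mod_cast h

lemma denom_apply (M : SL2R) (z : ℂ) : denom M z = (M.1 1 0 : ℂ) * z + M.1 1 1 := rfl

lemma mobius_eq_div_denom (M : SL2R) (z : ℂ) :
    mobius M z = ((M.1 0 0 : ℂ) * z + M.1 0 1) / denom M z := rfl

lemma slash_one_apply (M : SL2R) (f : ℂ → ℂ) (z : ℂ) :
    slash 1 M f z = (denom M z ^ 2)⁻¹ * f (mobius M z) := by
  simp [slash, _root_.zpow_neg]

lemma denom_mul (M N : SL2R) {z : ℂ} (hz : denom N z ≠ 0) :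
    denom (M * N) z = denom M (mobius N z) * denom N z := by
  rw [mobius_eq_div_denom, denom_apply M, add_mul, mul_assoc, div_mul_cancel₀ _ hz]
  simp only [denom, val_mul, mul_apply, Fin.sum_univ_two]
  push_cast
  ring

lemma mobius_mul (M N : SL2R) {z : ℂ} (hz : denom N z ≠ 0) :
    mobius (M * N) z = mobius M (mobius N z) := by
  have hnum : ((M * N).1 0 0 : ℂ) * z + (M * N).1 0 1
      = ((M.1 0 0 : ℂ) * mobius N z + M.1 0 1) * denom N z := by
    rw [mobius_eq_div_denom N, add_mul, mul_assoc, div_mul_cancel₀ _ hz]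
    simp only [denom, val_mul, mul_apply, Fin.sum_univ_two]
    push_cast
    ring
  rw [mobius_eq_div_denom (M * N), hnum, denom_mul M N hz, mul_div_mul_right _ _ hz]
  rfl

lemma mobius_sub_mobius (M : SL2R) {z w : ℂ} (hz : denom M z ≠ 0) (hw : denom M w ≠ 0) :
    mobius M z - mobius M w = (z - w) / (denom M z * denom M w) := by
  rw [mobius_eq_div_denom, mobius_eq_div_denom, div_sub_div _ _ hz hw, denom_apply, denom_apply]
  congr 1
  linear_combination (z - w) * val_det_eq_one M

lemma inv_sq_denom_mul_inv_sub_mobius (M : SL2R) {z w : ℂ} (hz : denom M z ≠ 0)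
    (hw : denom M w ≠ 0) (hzw : mobius M z ≠ mobius M w) :
    (denom M z ^ 2)⁻¹ * (mobius M z - mobius M w)⁻¹ = (z - w)⁻¹ - M.1 1 0 / denom M z := by
  have hzw' : z - w ≠ 0 := sub_ne_zero.2 fun h => hzw (h ▸ rfl)
  rw [mobius_sub_mobius M hz hw]
  field_simp
  simp only [denom_apply]
  ring

theorem slash_one_sum_inv_sub {ι : Type*} [Fintype ι] (M : SL2R) (ε w p : ι → ℂ)
    (hε : ∑ i, ε i = 0) (hwp : ∀ i, denom M (w i) ≠ 0 ∧ mobius M (w i) = p i)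
    {z : ℂ} (hz : denom M z ≠ 0) (hzp : ∀ i, mobius M z ≠ p i) :
    slash 1 M (fun x => ∑ i, ε i * (x - p i)⁻¹) z = ∑ i, ε i * (z - w i)⁻¹ := by
  have hterm (i : ι) :
      (denom M z ^ 2)⁻¹ * (ε i * (mobius M z - p i)⁻¹)
        = ε i * (z - w i)⁻¹ - ε i * (M.1 1 0 / denom M z) := by
    rw [← (hwp i).2, mul_left_comm, ← mul_sub,
      inv_sq_denom_mul_inv_sub_mobius M hz (hwp i).1 ((hwp i).2 ▸ hzp i)]
  rw [slash_one_apply, Finset.mul_sum, Finset.sum_congr rfl fun i _ => hterm i,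
    Finset.sum_sub_distrib, ← Finset.sum_mul, hε, zero_mul, sub_zero]

def IsInverseOrbit {R : Type*} [Add R] [One R] (M : SL2R) (a : R → ℂ) : Prop :=
  ∀ k, denom M (a (k + 1)) ≠ 0 ∧ mobius M (a (k + 1)) = a k

theorem IsInverseOrbit.mobius_pow {R : Type*} [AddMonoidWithOne R] {M : SL2R} {a : R → ℂ}
    (h : IsInverseOrbit M a) (t : ℕ) (k : R) :
    denom (M ^ t) (a (k + t)) ≠ 0 ∧ mobius (M ^ t) (a (k + t)) = a k := by
  induction t with
  | zero => simp [mobius, denom]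
  | succ t ih =>
    rw [pow_succ, Nat.cast_succ, ← add_assoc, mobius_mul _ _ (h _).1, denom_mul _ _ (h _).1,
      (h _).2]
    exact ⟨mul_ne_zero ih.1 (h _).1, ih.2⟩

lemma sq2_sq : sq2 ^ 2 = 2 := by simp [sq2, ← Complex.ofReal_pow]

lemma sq14_sq : sq14 ^ 2 = 14 := by simp [sq14, ← Complex.ofReal_pow]

lemma Umat_val : Umat.1 = !![√2, -1; 1, 0] := by
  rw [Umat, val_mul]
  simp [Smat, Tmat]

lemma denom_Umat (x : ℂ) : denom Umat x = x := by simp [denom, Umat_val]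

lemma mobius_Umat (x : ℂ) : mobius Umat x = (sq2 * x - 1) / x := by
  simp [mobius, Umat_val, sq2, sub_eq_add_neg]

lemma denom_Tmat (x : ℂ) : denom Tmat x = x := by simp [denom, Tmat]

lemma mobius_Tmat (x : ℂ) : mobius Tmat x = -1 / x := by simp [mobius, Tmat]

lemma slash_one_Tmat_apply (f : ℂ → ℂ) (z : ℂ) :
    slash 1 Tmat f z = z ^ (-2 : ℤ) * f (-1 / z) := by
  rw [slash_one_apply, denom_Tmat, mobius_Tmat, _root_.zpow_neg, zpow_two, sq]

lemma isInverseOrbit_Umat_of_mul_eq_one {R : Type*} [Add R] [One R] (a : R → ℂ)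
    (h : ∀ k, a (k + 1) * (sq2 - a k) = 1) : IsInverseOrbit Umat a := fun k => by
  have hk : a (k + 1) ≠ 0 := left_ne_zero_of_mul_eq_one (h k)
  refine ⟨by rwa [denom_Umat], ?_⟩
  rw [mobius_Umat, div_eq_iff hk]
  linear_combination h k

lemma denom_Tmat_ne_zero_and_mobius_Tmat_eq {x y : ℂ} (h : x * y = -1) :
    denom Tmat x ≠ 0 ∧ mobius Tmat x = y := by
  have hx : x ≠ 0 := by rintro rfl; simp at h
  refine ⟨by rwa [denom_Tmat], ?_⟩
  rw [mobius_Tmat, div_eq_iff hx]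
  linear_combination -h

lemma ZMod.four_cases (k : ZMod 4) : k = 0 ∨ k = 1 ∨ k = 2 ∨ k = 3 := by decide +revert

-- The orbits of the poles `(√2 + √14)/2` and `(-√2 + √14)/2` under
-- `U⁻¹ : x ↦ 1/(√2 - x)`.
def cycleA : ZMod 4 → ℂ :=
  ![(sq2 + sq14) / 2, (-sq2 - sq14) / 6, (7 * sq2 - sq14) / 14, (7 * sq2 - sq14) / 6]

def cycleB : ZMod 4 → ℂ :=
  ![(-sq2 + sq14) / 2, (3 * sq2 + sq14) / 2, (sq2 - sq14) / 6, (5 * sq2 - sq14) / 6]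

lemma isInverseOrbit_Umat_cycleA : IsInverseOrbit Umat cycleA := by
  refine isInverseOrbit_Umat_of_mul_eq_one _ fun k => ?_
  rcases ZMod.four_cases k with rfl | rfl | rfl | rfl <;> reduce_mod_char <;> simp [cycleA] <;>
    ring_nf <;> simp only [sq2_sq, sq14_sq] <;> norm_num

lemma isInverseOrbit_Umat_cycleB : IsInverseOrbit Umat cycleB := by
  refine isInverseOrbit_Umat_of_mul_eq_one _ fun k => ?_
  rcases ZMod.four_cases k with rfl | rfl | rfl | rfl <;> reduce_mod_char <;> simp [cycleB] <;>
    ring_nf <;> simp only [sq2_sq, sq14_sq] <;> norm_num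

def poleSign : Fin 4 → ℂ := ![1, 1, -1, -1]

/-- The poles of `q|Uˢ`, with residues `poleSign`; for `s = 0` in the order of `AwayFromPoles`. -/
def poles (s : ZMod 4) : Fin 4 → ℂ := ![cycleA s, cycleB s, cycleB (2 + s), cycleA (1 + s)]

def qShift (s : ZMod 4) (z : ℂ) : ℂ := ∑ i, poleSign i * (z - poles s i)⁻¹

lemma sum_poleSign : ∑ i, poleSign i = 0 := by simp [poleSign, Fin.sum_univ_four]

lemma qShift_zero_apply (z : ℂ) :
    qShift 0 z = (z - (sq2 + sq14) / 2)⁻¹ + (z - (-sq2 + sq14) / 2)⁻¹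
      - (z - (sq2 - sq14) / 6)⁻¹ - (z - (-sq2 - sq14) / 6)⁻¹ := by
  simp [qShift, poles, poleSign, Fin.sum_univ_four, cycleA, cycleB]
  ring

lemma awayFromPoles_iff (w : ℂ) : AwayFromPoles w ↔ ∀ i, w ≠ poles 0 i := by
  simp [AwayFromPoles, Fin.forall_fin_succ, poles, cycleA, cycleB]

lemma mobius_Umat_pow_poles (t : ℕ) (i : Fin 4) :
    denom (Umat ^ t) (poles t i) ≠ 0 ∧ mobius (Umat ^ t) (poles t i) = poles 0 i := by
  fin_cases i
  · simpa [poles] using isInverseOrbit_Umat_cycleA.mobius_pow t 0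
  · simpa [poles] using isInverseOrbit_Umat_cycleB.mobius_pow t 0
  · simpa [poles] using isInverseOrbit_Umat_cycleB.mobius_pow t 2
  · simpa [poles] using isInverseOrbit_Umat_cycleA.mobius_pow t 1

lemma mobius_Tmat_poles_add_two (i : Fin 4) :
    denom Tmat (poles 0 (i + 2)) ≠ 0 ∧ mobius Tmat (poles 0 (i + 2)) = poles 0 i := by
  apply denom_Tmat_ne_zero_and_mobius_Tmat_eq
  fin_cases i <;> simp [poles, cycleA, cycleB] <;>
    ring_nf <;> simp only [sq2_sq, sq14_sq] <;> norm_num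

lemma slash_one_Umat_pow_qShift (t : ℕ) {z : ℂ} (hz : denom (Umat ^ t) z ≠ 0)
    (hzp : AwayFromPoles (mobius (Umat ^ t) z)) :
    slash 1 (Umat ^ t) (qShift 0) z = qShift t z :=
  slash_one_sum_inv_sub _ _ _ _ sum_poleSign (mobius_Umat_pow_poles t) hz
    ((awayFromPoles_iff _).1 hzp)

lemma slash_one_Tmat_qShift {z : ℂ} (hz : z ≠ 0) (hzp : AwayFromPoles (-1 / z)) :
    slash 1 Tmat (qShift 0) z = -qShift 0 z := by
  rw [← mobius_Tmat, awayFromPoles_iff] at hzp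
  refine (slash_one_sum_inv_sub Tmat poleSign _ _ sum_poleSign mobius_Tmat_poles_add_two
    (by rwa [denom_Tmat]) hzp).trans ?_
  simp [qShift, poleSign, Fin.sum_univ_four]
  ring

lemma qShift_zero_add_one_add_two_add_three (z : ℂ) :
    qShift 0 z + qShift 1 z + qShift 2 z + qShift 3 z = 0 := by
  simp only [qShift, poles, poleSign, Fin.sum_univ_four]
  reduce_mod_char
  simp
  ring

/-- The function
`q(z) = (z-(√2+√14)/2)⁻¹ + (z-(-√2+√14)/2)⁻¹ - (z-(√2-√14)/6)⁻¹ - (z-(-√2-√14)/6)⁻¹`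
satisfies the two rational period function relations of weight `2` on `G₄`:
`q(z) + z⁻² q(-1/z) = 0` and `q + q|U + q|U² + q|U³ = 0`. -/
theorem rpf_example_weight2 (q : ℂ → ℂ)
    (hq : ∀ z, q z = (z - (sq2 + sq14) / 2)⁻¹ + (z - (-sq2 + sq14) / 2)⁻¹
        - (z - (sq2 - sq14) / 6)⁻¹ - (z - (-sq2 - sq14) / 6)⁻¹) :
    (∀ z : ℂ, z ≠ 0 → AwayFromPoles z → AwayFromPoles (-1 / z) →
      q z + z ^ (-2 : ℤ) * q (-1 / z) = 0) ∧
    (∀ z : ℂ,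
      (∀ t < 4, denom (Umat ^ t) z ≠ 0 ∧ AwayFromPoles (mobius (Umat ^ t) z)) →
      q z + slash 1 Umat q z + slash 1 (Umat ^ 2) q z + slash 1 (Umat ^ 3) q z = 0) := by
  obtain rfl : q = qShift 0 := funext fun z => by rw [hq, qShift_zero_apply]
  refine ⟨fun z hz _ hzp => ?_, fun z hU => ?_⟩
  · rw [← slash_one_Tmat_apply, slash_one_Tmat_qShift hz hzp, add_neg_cancel]
  · have h t (ht : t < 4) := slash_one_Umat_pow_qShift t (hU t ht).1 (hU t ht).2
    have h1 : slash 1 Umat (qShift 0) z = qShift 1 z := by simpa using h 1 (by norm_num)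
    rw [h1, h 2 (by norm_num), h 3 (by norm_num)]
    exact_mod_cast qShift_zero_add_one_add_two_add_three z
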